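/- Let d, N ≥ 1, C_φ ∈ (0,4), C_{φ'}, C_{φ''} > 0, and let φ : ℝ → ℝ be twice differentiable with |φ| ≤ C_φ, |φ'| ≤ C_{φ'}, |φ''| ≤ C_{φ''}. Fix A ∈ ℝ^{N×d}, W ∈ ℝ^{N×N}, a sequence (X_t) in ℝ^d with ‖X_t‖_max ≤ 1, a sequence (S_t) in ℝ^N with ‖S_t‖_max ≤ 1, and indices n, m, i, j ∈ {1,…,N}. Write z_t^k = (1/d)∑_ℓ φ(A^{kℓ})X_t^ℓ + (1/N)∑_ℓ φ(W^{kℓ})S_t^ℓ. Suppose max_k |S̃_t^{W^{nm},k}| ≤ C_{φ'}/((4−C_φ)N) and max_k |S̃_t^{W^{ij},k}| ≤ C_{φ'}/((4−C_φ)N) for all t, and that (S̃̃_t^{W^{nm},W^{ij},k})_{t≥0} satisfies S̃̃_{t+1}^{W^{nm},W^{ij},k} = σ''(z_t^k)·((δ_{kn}/N)φ'(W^{nm})S_t^m + (1/N)∑_ℓ φ(W^{kℓ})S̃_t^{W^{nm},ℓ})·((δ_{ik}/N)φ'(W^{ij})S_t^j + (1/N)∑_ℓ φ(W^{kℓ})S̃_t^{W^{ij},ℓ})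 + σ'(z_t^k)·((δ_{ik}δ_{(i,j)=(n,m)}/N)φ''(W^{ij})S_t^j + (1/N)∑_ℓ φ(W^{kℓ})S̃̃_t^{W^{nm},W^{ij},ℓ}). If max_k |S̃̃_0^{W^{nm},W^{ij},k}| ≤ a_{WW,max}/(1−C_φ/4), where a_{WW,max} = C_{φ'}² M_φ²/(10 N²) + C_{φ''}/(4N) and M_φ = 1 + C_φ/(4−C_φ), then max_k |S̃̃_t^{W^{nm},W^{ij},k}| ≤ a_{WW,max}/(1−C_φ/4) for all t ≥ 0. In particular this holds when S̃̃_0 = 0. -/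

import Mathlib

open Finset

noncomputable def sigmoid (y : ℝ) : ℝ := 1 / (1 + Real.exp (-y))

lemma sigmoid_pos (y : ℝ) : 0 < sigmoid y := by
  unfold sigmoid; positivity

lemma sigmoid_lt_one (y : ℝ) : sigmoid y < 1 := by
  unfold sigmoid
  rw [div_lt_one (by positivity)]
  linarith [Real.exp_pos (-y)]

lemma hasDerivAt_sigmoid (y : ℝ) :
    HasDerivAt sigmoid (sigmoid y * (1 - sigmoid y)) y := by
  have h1 : HasDerivAt (fun y : ℝ => 1 + Real.exp (-y)) (-Real.exp (-y)) y := by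
    simpa using (((Real.hasDerivAt_exp (-y)).comp y (hasDerivAt_neg y)).const_add 1)
  have hne : (1 + Real.exp (-y)) ≠ 0 := by positivity
  have h2 := h1.inv hne
  have : sigmoid = fun y : ℝ => (1 + Real.exp (-y))⁻¹ := by
    funext z; simp [sigmoid, one_div]
  rw [this]
  have h3 : HasDerivAt (fun y : ℝ => (1 + Real.exp (-y))⁻¹) _ y := h2
  convert h3 using 1
  have he := Real.exp_pos (-y)
  field_simp
  ring

lemma deriv_sigmoid : deriv sigmoid = fun y => sigmoid y * (1 - sigmoid y) := by
  funext y; exact (hasDerivAt_sigmoid y).deriv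

lemma deriv2_sigmoid (y : ℝ) :
    deriv (deriv sigmoid) y = sigmoid y * (1 - sigmoid y) * (1 - 2 * sigmoid y) := by
  rw [deriv_sigmoid]
  have hs := hasDerivAt_sigmoid y
  have h : HasDerivAt (fun y => sigmoid y * (1 - sigmoid y))
      (sigmoid y * (1 - sigmoid y) * (1 - sigmoid y) + sigmoid y * (0 - sigmoid y * (1 - sigmoid y))) y :=
    hs.mul ((hasDerivAt_const y (1:ℝ)).sub hs)
  rw [h.deriv]; ring

lemma abs_deriv_sigmoid_le (y : ℝ) : |deriv sigmoid y| ≤ 1 / 4 := by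
  rw [deriv_sigmoid]
  have h1 := sigmoid_pos y
  have h2 := sigmoid_lt_one y
  rw [abs_le]
  constructor <;> nlinarith [sq_nonneg (sigmoid y - 1/2)]

lemma abs_deriv2_sigmoid_le (y : ℝ) : |deriv (deriv sigmoid) y| ≤ 1 / 10 := by
  rw [deriv2_sigmoid]
  have h1 := sigmoid_pos y
  have h2 := sigmoid_lt_one y
  set s := sigmoid y
  rw [abs_le]
  constructor <;> nlinarith [sq_nonneg (s - 1/2), sq_nonneg (s*(1-s)), sq_nonneg (s - 1/5), sq_nonneg (s - 4/5), sq_nonneg (s*s - s + 1/6), mul_pos h1 (by linarith : (0:ℝ) < 1 - s)]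

theorem second_derivative_WW_bound
    (d N : ℕ) (hd : 1 ≤ d) (hN : 1 ≤ N)
    (Cφ Cφ' Cφ'' : ℝ) (hCφ0 : 0 < Cφ) (hCφ4 : Cφ < 4) (hCφ' : 0 < Cφ') (hCφ'' : 0 < Cφ'')
    (φ : ℝ → ℝ) (hφdiff : Differentiable ℝ φ) (hφdiff2 : Differentiable ℝ (deriv φ))
    (hφ : ∀ y, |φ y| ≤ Cφ) (hφ' : ∀ y, |deriv φ y| ≤ Cφ')
    (hφ'' : ∀ y, |deriv (deriv φ) y| ≤ Cφ'')
    (A : Fin N → Fin d → ℝ) (W : Fin N → Fin N → ℝ)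
    (X : ℕ → Fin d → ℝ) (hX : ∀ t, ‖X t‖ ≤ 1)
    (S : ℕ → Fin N → ℝ) (hS : ∀ t, ‖S t‖ ≤ 1)
    (n m i j : Fin N)
    (tSWnm tSWij : ℕ → Fin N → ℝ)
    (htSWnm : ∀ t k, |tSWnm t k| ≤ Cφ' / ((4 - Cφ) * N))
    (htSWij : ∀ t k, |tSWij t k| ≤ Cφ' / ((4 - Cφ) * N))
    (tt : ℕ → Fin N → ℝ)
    (hrec : ∀ t k, tt (t + 1) k =
      deriv (deriv sigmoid) ((1 / (d : ℝ)) * ∑ ℓ, φ (A k ℓ) * X t ℓ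
          + (1 / (N : ℝ)) * ∑ ℓ, φ (W k ℓ) * S t ℓ)
        * ((if k = n then (1 : ℝ) else 0) / (N : ℝ) * deriv φ (W n m) * S t m
            + (1 / (N : ℝ)) * ∑ ℓ, φ (W k ℓ) * tSWnm t ℓ)
        * ((if i = k then (1 : ℝ) else 0) / (N : ℝ) * deriv φ (W i j) * S t j
            + (1 / (N : ℝ)) * ∑ ℓ, φ (W k ℓ) * tSWij t ℓ)
      + deriv sigmoid ((1 / (d : ℝ)) * ∑ ℓ, φ (A k ℓ) * X t ℓ
          + (1 / (N : ℝ)) * ∑ ℓ, φ (W k ℓ) * S t ℓ)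
        * ((if i = k then (1 : ℝ) else 0) * (if (i, j) = (n, m) then (1 : ℝ) else 0) / (N : ℝ)
              * deriv (deriv φ) (W i j) * S t j
            + (1 / (N : ℝ)) * ∑ ℓ, φ (W k ℓ) * tt t ℓ))
    (Mφ aWW : ℝ)
    (hMφ : Mφ = 1 + Cφ / (4 - Cφ))
    (haWW : aWW = Cφ' ^ 2 * Mφ ^ 2 / (10 * (N : ℝ) ^ 2) + Cφ'' / (4 * (N : ℝ)))
    (h0 : ∀ k, |tt 0 k| ≤ aWW / (1 - Cφ / 4)) :
    ∀ t k, |tt t k| ≤ aWW / (1 - Cφ / 4) := by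
  have hN0 : (0:ℝ) < N := by exact_mod_cast hN
  have h4C : (0:ℝ) < 4 - Cφ := by linarith
  have hMpos : 0 < Mφ := by rw [hMφ]; positivity
  have haWWpos : 0 < aWW := by rw [haWW]; positivity
  have hden : (0:ℝ) < 1 - Cφ / 4 := by linarith
  set B := aWW / (1 - Cφ / 4) with hB
  have hBpos : 0 < B := by positivity
  -- generic sum bound
  have sumb : ∀ (k : Fin N) (f : Fin N → ℝ) (c : ℝ), 0 ≤ c → (∀ ℓ, |f ℓ| ≤ c) →
      |(1 / (N : ℝ)) * ∑ ℓ, φ (W k ℓ) * f ℓ| ≤ Cφ * c := by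
    intro k f c hc hf
    have h1 : |∑ ℓ, φ (W k ℓ) * f ℓ| ≤ ∑ ℓ : Fin N, Cφ * c := by
      refine (Finset.abs_sum_le_sum_abs _ _).trans (Finset.sum_le_sum ?_)
      intro ℓ _
      rw [abs_mul]
      exact mul_le_mul (hφ _) (hf ℓ) (abs_nonneg _) hCφ0.le
    rw [abs_mul]
    have : |(1 : ℝ) / N| = 1 / N := abs_of_pos (by positivity)
    rw [this]
    calc (1 / (N:ℝ)) * |∑ ℓ, φ (W k ℓ) * f ℓ| ≤ (1 / (N:ℝ)) * ((N:ℝ) * (Cφ * c)) := by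
          apply mul_le_mul_of_nonneg_left _ (by positivity)
          simpa [Finset.sum_const, Finset.card_univ, mul_comm] using h1
      _ = Cφ * c := by field_simp
  intro t
  induction t with
  | zero => exact h0
  | succ t ih =>
    intro k
    rw [hrec t k]
    have hSm : ∀ (l : Fin N) (t : ℕ), |S t l| ≤ 1 := fun l t =>
      le_trans (norm_le_pi_norm (S t) l) (hS t)
    -- bounds on the first factors (E1, E2)
    have hE1 : ∀ (b : ℝ), |b| ≤ 1 → ∀ (p q : Fin N) (tS : ℕ → Fin N → ℝ),
        (∀ t k, |tS t k| ≤ Cφ' / ((4 - Cφ) * N)) →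
        |b / (N : ℝ) * deriv φ (W p q) * S t q
            + (1 / (N : ℝ)) * ∑ ℓ, φ (W k ℓ) * tS t ℓ| ≤ Cφ' * Mφ / N := by
      intro b hb p q tS htS
      have h1 : |b / (N : ℝ) * deriv φ (W p q) * S t q| ≤ Cφ' / N := by
        rw [abs_mul, abs_mul, abs_div]
        have : |(N : ℝ)| = N := abs_of_pos hN0
        rw [this]
        calc |b| / (N:ℝ) * |deriv φ (W p q)| * |S t q|
            ≤ 1 / (N:ℝ) * Cφ' * 1 := by
              apply mul_le_mul _ (hSm q t) (abs_nonneg _) (by positivity)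
              exact mul_le_mul (div_le_div_of_nonneg_right hb hN0.le) (hφ' _)
                (abs_nonneg _) (by positivity)
          _ = Cφ' / N := by ring
      have h2 : |(1 / (N : ℝ)) * ∑ ℓ, φ (W k ℓ) * tS t ℓ| ≤ Cφ * (Cφ' / ((4 - Cφ) * N)) :=
        sumb k _ _ (by positivity) (htS t)
      calc |b / (N : ℝ) * deriv φ (W p q) * S t q
            + (1 / (N : ℝ)) * ∑ ℓ, φ (W k ℓ) * tS t ℓ|
          ≤ Cφ' / N + Cφ * (Cφ' / ((4 - Cφ) * N)) := (abs_add_le _ _).trans (add_le_add h1 h2)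
        _ = Cφ' * Mφ / N := by rw [hMφ]; field_simp
    have hbnm : |(if k = n then (1:ℝ) else 0)| ≤ 1 := by split <;> norm_num
    have hbij : |(if i = k then (1:ℝ) else 0)| ≤ 1 := by split <;> norm_num
    have hEnm := hE1 _ hbnm n m tSWnm htSWnm
    have hEij := hE1 _ hbij i j tSWij htSWij
    -- bound on E3
    have h3a : |(if i = k then (1:ℝ) else 0) * (if (i, j) = (n, m) then (1:ℝ) else 0) / (N : ℝ)
              * deriv (deriv φ) (W i j) * S t j| ≤ Cφ'' / N := by
      rw [abs_mul, abs_mul, abs_div, abs_mul]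
      have hNabs : |(N : ℝ)| = N := abs_of_pos hN0
      rw [hNabs]
      have hb1 : |(if i = k then (1:ℝ) else 0)| ≤ 1 := by split <;> norm_num
      have hb2 : |(if (i, j) = (n, m) then (1:ℝ) else 0)| ≤ 1 := by split <;> norm_num
      calc |(if i = k then (1:ℝ) else 0)| * |(if (i, j) = (n, m) then (1:ℝ) else 0)| / (N:ℝ)
              * |deriv (deriv φ) (W i j)| * |S t j|
          ≤ 1 * 1 / (N:ℝ) * Cφ'' * 1 := by
            apply mul_le_mul _ (hSm j t) (abs_nonneg _) (by positivity)
            apply mul_le_mul _ (hφ'' _) (abs_nonneg _) (by positivity)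
            apply div_le_div_of_nonneg_right _ hN0.le
            exact mul_le_mul hb1 hb2 (abs_nonneg _) zero_le_one
        _ = Cφ'' / N := by ring
    have h3b : |(1 / (N : ℝ)) * ∑ ℓ, φ (W k ℓ) * tt t ℓ| ≤ Cφ * B :=
      sumb k _ _ hBpos.le (fun ℓ => ih ℓ)
    have hd2 := abs_deriv2_sigmoid_le ((1 / (d : ℝ)) * ∑ ℓ, φ (A k ℓ) * X t ℓ
          + (1 / (N : ℝ)) * ∑ ℓ, φ (W k ℓ) * S t ℓ)
    have hd1 := abs_deriv_sigmoid_le ((1 / (d : ℝ)) * ∑ ℓ, φ (A k ℓ) * X t ℓ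
          + (1 / (N : ℝ)) * ∑ ℓ, φ (W k ℓ) * S t ℓ)
    have hterm1 : |deriv (deriv sigmoid) ((1 / (d : ℝ)) * ∑ ℓ, φ (A k ℓ) * X t ℓ
          + (1 / (N : ℝ)) * ∑ ℓ, φ (W k ℓ) * S t ℓ)
        * ((if k = n then (1 : ℝ) else 0) / (N : ℝ) * deriv φ (W n m) * S t m
            + (1 / (N : ℝ)) * ∑ ℓ, φ (W k ℓ) * tSWnm t ℓ)
        * ((if i = k then (1 : ℝ) else 0) / (N : ℝ) * deriv φ (W i j) * S t j
            + (1 / (N : ℝ)) * ∑ ℓ, φ (W k ℓ) * tSWij t ℓ)|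
        ≤ 1 / 10 * (Cφ' * Mφ / N) * (Cφ' * Mφ / N) := by
      rw [abs_mul, abs_mul]
      apply mul_le_mul _ hEij (abs_nonneg _) (by positivity)
      exact mul_le_mul hd2 hEnm (abs_nonneg _) (by norm_num)
    have hterm2 : |deriv sigmoid ((1 / (d : ℝ)) * ∑ ℓ, φ (A k ℓ) * X t ℓ
          + (1 / (N : ℝ)) * ∑ ℓ, φ (W k ℓ) * S t ℓ)
        * ((if i = k then (1 : ℝ) else 0) * (if (i, j) = (n, m) then (1 : ℝ) else 0) / (N : ℝ)
              * deriv (deriv φ) (W i j) * S t j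
            + (1 / (N : ℝ)) * ∑ ℓ, φ (W k ℓ) * tt t ℓ)|
        ≤ 1 / 4 * (Cφ'' / N + Cφ * B) := by
      rw [abs_mul]
      apply mul_le_mul hd1 ((abs_add_le _ _).trans (add_le_add h3a h3b)) (abs_nonneg _) (by norm_num)
    have key : 1 / 10 * (Cφ' * Mφ / N) * (Cφ' * Mφ / N) + 1 / 4 * (Cφ'' / N + Cφ * B) = B := by
      have hBeq : B * (1 - Cφ / 4) = aWW := by
        rw [hB]; field_simp
      have h2 : 1 / 10 * (Cφ' * Mφ / N) * (Cφ' * Mφ / N) + 1 / 4 * (Cφ'' / N + Cφ * B)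
          = aWW + Cφ * B / 4 := by
        rw [haWW]; field_simp; ring
      rw [h2]; linarith
    calc _ ≤ 1 / 10 * (Cφ' * Mφ / N) * (Cφ' * Mφ / N) + 1 / 4 * (Cφ'' / N + Cφ * B) :=
          (abs_add_le _ _).trans (add_le_add hterm1 hterm2)
      _ = B := key
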